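/- arXiv:math/0407128 — 2 statements merged into one kernel-verified Lean document; each statement's English description precedes it below -/
import Mathlib

section
/- With the same setup ($0<\pi\le1$, $x\in(0,1)$, steps $\gamma_n\in(0,1)$, $x_{n+1}=x_n+\pi\gamma_{n+1}x_n(1-x_n)$), one has $1-x_n \le (1-x)\exp\big((1/x-1)e^{\pi x}\big)\,e^{-\pi\Gamma_n}$ for all $n\ge0$, so $1-x_n = O(e^{-\pi\Gamma_n})$; and moreover $1-x_n \ge (1-x)\prod_{k=1}^n(1-\pi\gamma_k)$. -/
/-!
With `c k = π γ (k + 1)` and `y n = 1 - x n` the recursion reads `y (n + 1) = y n (1 - c n x n)`,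
so `y n = y 0 ∏_{k<n} (1 - c k x k)`. Comparing each factor with `1 - c k` gives the lower bound,
and `1 - t ≤ e^{-t}` gives `y n ≤ y 0 exp (-∑_{k<n} c k x k)`. As `x` increases, `x k ≥ x 0`, which
first yields the crude bound `y k ≤ y 0 exp (-x 0 C k)` with `C k = ∑_{i<k} c i = π Γ k`. Feeding it
back, `∑ c k x k = C n - ∑ c k y k ≥ C n - y 0 ∑ c k exp (-x 0 C k)`, and the last sum is a Riemann
sum for `∫ exp (-x 0 u) du` with steps `c k ≤ π`, hence at most `exp (π x 0) / x 0`.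
-/

open Finset Filter

open Real in
theorem le_exp_mul_one_sub_exp_neg {t b : ℝ} (ht : 0 ≤ t) (htb : t ≤ b) :
    t ≤ exp b * (1 - exp (-t)) := by
  have h : t ≤ exp t * (1 - exp (-t)) := by
    rw [mul_sub, mul_one, ← exp_add, add_neg_cancel, exp_zero]
    linarith [add_one_le_exp t]
  have hpos : 0 ≤ 1 - exp (-t) := by
    rw [sub_nonneg, exp_le_one_iff]
    linarith
  exact h.trans (mul_le_mul_of_nonneg_right (exp_le_exp.2 htb) hpos)

open Real in
theorem sum_mul_exp_neg_mul_sum_range_le {a b : ℝ} (ha : 0 < a) {g : ℕ → ℝ}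
    (hg : ∀ k, 0 ≤ g k) (hgb : ∀ k, a * g k ≤ b) (n : ℕ) :
    ∑ k ∈ range n, g k * exp (-(a * ∑ i ∈ range k, g i)) ≤ exp b / a := by
  set E : ℕ → ℝ := fun k => exp (-(a * ∑ i ∈ range k, g i)) with hE
  have hstep : ∀ k, g k * E k ≤ exp b / a * (E k - E (k + 1)) := by
    intro k
    have hsucc : E (k + 1) = E k * exp (-(a * g k)) := by
      simp only [hE, sum_range_succ, mul_add, neg_add, exp_add]
    have hag := le_exp_mul_one_sub_exp_neg (mul_nonneg ha.le (hg k)) (hgb k)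
    calc g k * E k = a * g k / a * E k := by field_simp
      _ ≤ exp b * (1 - exp (-(a * g k))) / a * E k := by gcongr
      _ = exp b / a * (E k - E (k + 1)) := by rw [hsucc]; ring
  calc ∑ k ∈ range n, g k * E k
      ≤ ∑ k ∈ range n, exp b / a * (E k - E (k + 1)) := sum_le_sum fun k _ => hstep k
    _ = exp b / a * (1 - E n) := by rw [← mul_sum, sum_range_sub']; simp [hE]
    _ ≤ exp b / a := mul_le_of_le_one_right (by positivity) (by linarith [(exp_pos _ : 0 < E n)])

theorem Finset.prod_Icc_one_eq_prod_range {M : Type*} [CommMonoid M] (f : ℕ → M) (n : ℕ) :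
    ∏ k ∈ Icc 1 n, f k = ∏ k ∈ range n, f (k + 1) := by
  rw [range_eq_Ico, prod_Ico_add' f 0 n 1, zero_add, Ico_add_one_right_eq_Icc]

theorem Finset.sum_Icc_one_eq_sum_range {M : Type*} [AddCommMonoid M] (f : ℕ → M) (n : ℕ) :
    ∑ k ∈ Icc 1 n, f k = ∑ k ∈ range n, f (k + 1) := by
  rw [range_eq_Ico, sum_Ico_add' f 0 n 1, zero_add, Ico_add_one_right_eq_Icc]

namespace Logistic

variable {c x : ℕ → ℝ}

theorem one_sub_succ (hrec : ∀ n, x (n + 1) = x n + c n * x n * (1 - x n)) (n : ℕ) :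
    1 - x (n + 1) = (1 - x n) * (1 - c n * x n) := by
  rw [hrec]; ring

theorem one_sub_eq_prod (hrec : ∀ n, x (n + 1) = x n + c n * x n * (1 - x n)) (n : ℕ) :
    1 - x n = (1 - x 0) * ∏ k ∈ range n, (1 - c k * x k) := by
  induction n with
  | zero => simp
  | succ n ih => rw [one_sub_succ hrec, ih, prod_range_succ, mul_assoc]

theorem mem_Icc (hrec : ∀ n, x (n + 1) = x n + c n * x n * (1 - x n))
    (hc : ∀ k, c k ∈ Set.Icc 0 1) (hx : x 0 ∈ Set.Icc 0 1) (n : ℕ) :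
    x n ∈ Set.Icc (x 0) 1 := by
  induction n with
  | zero => exact ⟨le_rfl, hx.2⟩
  | succ n ih =>
    obtain ⟨hc0, hc1⟩ := hc n
    have hxn : 0 ≤ x n := hx.1.trans ih.1
    have hcx : c n * x n ≤ 1 := mul_le_one₀ hc1 hxn ih.2
    have hy : 0 ≤ 1 - x (n + 1) := by
      rw [one_sub_succ hrec]; exact mul_nonneg (by linarith [ih.2]) (by linarith)
    refine ⟨?_, by linarith⟩
    rw [hrec]
    linarith [mul_nonneg (mul_nonneg hc0 hxn) (sub_nonneg.2 ih.2), ih.1]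

theorem prod_one_sub_le_one_sub (hrec : ∀ n, x (n + 1) = x n + c n * x n * (1 - x n))
    (hc : ∀ k, c k ∈ Set.Icc 0 1) (hx : x 0 ∈ Set.Icc 0 1) (n : ℕ) :
    (1 - x 0) * ∏ k ∈ range n, (1 - c k) ≤ 1 - x n := by
  have hxk := mem_Icc hrec hc hx
  rw [one_sub_eq_prod hrec n]
  gcongr with k
  · exact sub_nonneg.2 hx.2
  · exact fun k _ => sub_nonneg.2 (hc k).2
  · exact mul_le_of_le_one_right (hc k).1 (hxk k).2

theorem one_sub_le_exp_neg_sum_mul (hrec : ∀ n, x (n + 1) = x n + c n * x n * (1 - x n))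
    (hc : ∀ k, c k ∈ Set.Icc 0 1) (hx : x 0 ∈ Set.Icc 0 1) (n : ℕ) :
    1 - x n ≤ (1 - x 0) * Real.exp (-∑ k ∈ range n, c k * x k) := by
  have hxk := mem_Icc hrec hc hx
  rw [one_sub_eq_prod hrec n, ← sum_neg_distrib, Real.exp_sum]
  gcongr with k
  · exact sub_nonneg.2 hx.2
  · exact fun k _ => sub_nonneg.2 (mul_le_one₀ (hc k).2 (hx.1.trans (hxk k).1) (hxk k).2)
  · linarith [Real.add_one_le_exp (-(c k * x k))]

theorem one_sub_le_exp_neg_mul_sum (hrec : ∀ n, x (n + 1) = x n + c n * x n * (1 - x n))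
    (hc : ∀ k, c k ∈ Set.Icc 0 1) (hx : x 0 ∈ Set.Icc 0 1) (n : ℕ) :
    1 - x n ≤ (1 - x 0) * Real.exp (-(x 0 * ∑ k ∈ range n, c k)) := by
  have hxk := mem_Icc hrec hc hx
  refine (one_sub_le_exp_neg_sum_mul hrec hc hx n).trans ?_
  gcongr
  · exact sub_nonneg.2 hx.2
  · rw [mul_sum]
    exact sum_le_sum fun k _ => by
      rw [mul_comm]; exact mul_le_mul_of_nonneg_left (hxk k).1 (hc k).1

theorem sum_sub_le_sum_mul (hrec : ∀ n, x (n + 1) = x n + c n * x n * (1 - x n)) {M : ℝ}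
    (hc : ∀ k, c k ∈ Set.Icc 0 M) (hM : M ≤ 1) (hx : x 0 ∈ Set.Ioc 0 1) (n : ℕ) :
    ∑ k ∈ range n, c k - (1 - x 0) * (Real.exp (M * x 0) / x 0) ≤ ∑ k ∈ range n, c k * x k := by
  have hc1 : ∀ k, c k ∈ Set.Icc 0 1 := fun k => ⟨(hc k).1, (hc k).2.trans hM⟩
  have hcrude := one_sub_le_exp_neg_mul_sum hrec hc1 (Set.Ioc_subset_Icc_self hx)
  have hriemann := sum_mul_exp_neg_mul_sum_range_le hx.1 (fun k => (hc k).1)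
    (fun k => (mul_comm (x 0) (c k)).trans_le (mul_le_mul_of_nonneg_right (hc k).2 hx.1.le)) n
  suffices ∑ k ∈ range n, c k - ∑ k ∈ range n, c k * x k
      ≤ (1 - x 0) * (Real.exp (M * x 0) / x 0) by linarith
  calc ∑ k ∈ range n, c k - ∑ k ∈ range n, c k * x k
      = ∑ k ∈ range n, c k * (1 - x k) := by
        rw [← sum_sub_distrib]; simp only [mul_sub, mul_one]
    _ ≤ ∑ k ∈ range n, c k * ((1 - x 0) * Real.exp (-(x 0 * ∑ i ∈ range k, c i))) :=
        sum_le_sum fun k _ => mul_le_mul_of_nonneg_left (hcrude k) (hc k).1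
    _ = (1 - x 0) * ∑ k ∈ range n, c k * Real.exp (-(x 0 * ∑ i ∈ range k, c i)) := by
        rw [mul_sum]; exact sum_congr rfl fun k _ => by ring
    _ ≤ (1 - x 0) * (Real.exp (M * x 0) / x 0) :=
        mul_le_mul_of_nonneg_left hriemann (sub_nonneg.2 hx.2)

theorem one_sub_le_exp_mul_exp_neg_sum (hrec : ∀ n, x (n + 1) = x n + c n * x n * (1 - x n))
    {M : ℝ} (hc : ∀ k, c k ∈ Set.Icc 0 M) (hM : M ≤ 1) (hx : x 0 ∈ Set.Ioc 0 1) (n : ℕ) :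
    1 - x n ≤ (1 - x 0) * Real.exp ((1 / x 0 - 1) * Real.exp (M * x 0))
      * Real.exp (-∑ k ∈ range n, c k) := by
  have hc1 : ∀ k, c k ∈ Set.Icc 0 1 := fun k => ⟨(hc k).1, (hc k).2.trans hM⟩
  have hconst : (1 / x 0 - 1) * Real.exp (M * x 0) = (1 - x 0) * (Real.exp (M * x 0) / x 0) := by
    field_simp [hx.1.ne']
  calc 1 - x n ≤ (1 - x 0) * Real.exp (-∑ k ∈ range n, c k * x k) :=
        one_sub_le_exp_neg_sum_mul hrec hc1 (Set.Ioc_subset_Icc_self hx) n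
    _ ≤ (1 - x 0) * Real.exp ((1 / x 0 - 1) * Real.exp (M * x 0) + -∑ k ∈ range n, c k) := by
        gcongr
        · exact sub_nonneg.2 hx.2
        · linarith [sum_sub_le_sum_mul hrec hc hM hx n]
    _ = _ := by rw [Real.exp_add, mul_assoc]

end Logistic

theorem stmt7 (π x₀ : ℝ) (hπ : π ∈ Set.Ioc (0:ℝ) 1) (hx₀ : x₀ ∈ Set.Ioo (0:ℝ) 1)
    (γ : ℕ → ℝ) (hγ : ∀ n ≥ 1, γ n ∈ Set.Ioo (0:ℝ) 1)
    (Γ : ℕ → ℝ) (hΓ : ∀ n, Γ n = ∑ k ∈ Finset.Icc 1 n, γ k)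
    (x : ℕ → ℝ) (hx0 : x 0 = x₀)
    (hrec : ∀ n, x (n + 1) = x n + π * γ (n + 1) * x n * (1 - x n)) :
    (∀ n, 1 - x n ≤ (1 - x₀) * Real.exp ((1 / x₀ - 1) * Real.exp (π * x₀))
        * Real.exp (-π * Γ n)) ∧
    (fun n => 1 - x n) =O[atTop] (fun n => Real.exp (-π * Γ n)) ∧
    (∀ n, (1 - x₀) * ∏ k ∈ Finset.Icc 1 n, (1 - π * γ k) ≤ 1 - x n) := by
  subst hx0
  have hc : ∀ k, π * γ (k + 1) ∈ Set.Icc 0 π := fun k => by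
    obtain ⟨hγ0, hγ1⟩ := hγ (k + 1) k.succ_pos
    exact ⟨mul_nonneg hπ.1.le hγ0.le, mul_le_of_le_one_right hπ.1.le hγ1.le⟩
  have hc1 : ∀ k, π * γ (k + 1) ∈ Set.Icc 0 1 := fun k => ⟨(hc k).1, (hc k).2.trans hπ.2⟩
  have hx : x 0 ∈ Set.Ioc 0 1 := Set.Ioo_subset_Ioc_self hx₀
  have hupper : ∀ n, 1 - x n ≤ (1 - x 0) * Real.exp ((1 / x 0 - 1) * Real.exp (π * x 0))
      * Real.exp (-π * Γ n) := fun n => by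
    rw [hΓ, sum_Icc_one_eq_sum_range, neg_mul, mul_sum]
    exact Logistic.one_sub_le_exp_mul_exp_neg_sum hrec hc hπ.2 hx n
  refine ⟨hupper, ?_, fun n => ?_⟩
  · refine Asymptotics.IsBigO.of_bound
      ((1 - x 0) * Real.exp ((1 / x 0 - 1) * Real.exp (π * x 0))) (Eventually.of_forall fun n => ?_)
    have hxn := Logistic.mem_Icc hrec hc1 (Set.Ioc_subset_Icc_self hx) n
    rw [Real.norm_of_nonneg (sub_nonneg.2 hxn.2), Real.norm_of_nonneg (Real.exp_pos _).le]
    exact hupper n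
  · rw [prod_Icc_one_eq_prod_range]
    exact Logistic.prod_one_sub_le_one_sub hrec hc1 (Set.Ioc_subset_Icc_self hx) n
end

section
/- If $0<p_B<p_A\le1$ and $x\in(0,1)$, then the two-armed bandit process $(X_n)$ started at $x$ is a bounded submartingale converging a.s. to a random variable $X_\infty$ with values in $\{0,1\}$, and $\mathbb{P}_x(X_\infty=1) = x + \pi\sum_{n\ge0}\gamma_{n+1}\mathbb{E}_x[X_n(1-X_n)] > x$, where $\pi=p_A-p_B$. -/
/-!
Given the past `ℱ n`, the next draw `(U, 𝟙_A, 𝟙_B)` is independent of it while `X n` takes only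
finitely many values, so `𝔼[X (n+1) | ℱ n] = X n + γ (n+1) π X n (1 - X n)`. Hence `X` is a
`[0, 1]`-valued submartingale, it converges a.s. to some `X∞`, and taking expectations
`𝔼 X N = x + π ∑_{n < N} γ (n+1) 𝔼[X n (1 - X n)]`. These partial sums converge to
`(𝔼 X∞ - x) / π`; since `∑ γ n = ∞` while `𝔼[X n (1 - X n)] → 𝔼[X∞ (1 - X∞)]`, the latter limit
must vanish, i.e. `X∞ ∈ {0, 1}` a.s., and then `ℙ(X∞ = 1) = 𝔼 X∞`. This exceeds `x` because
the `n = 0` term of the series is `γ 1 x (1 - x) > 0`.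
-/

open MeasureTheory ProbabilityTheory Filter Set Topology

section Freezing

variable {Ω β : Type*} {mΩ : MeasurableSpace Ω} {μ : Measure Ω}

lemma Finset.sum_indicator_preimage_singleton {Y : Ω → β} {s : Finset β} {ω : Ω}
    (hY : Y ω ∈ s) (f : β → Ω → ℝ) :
    ∑ c ∈ s, (Y ⁻¹' {c}).indicator (f c) ω = f (Y ω) ω := by
  classical
  simp only [Set.indicator_apply, Set.mem_preimage, Set.mem_singleton_iff]
  rw [Finset.sum_ite_eq, if_pos hY]

theorem condExp_comp_eq_integral_of_indep [MeasurableSpace β] [MeasurableSingletonClass β]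
    [IsFiniteMeasure μ] {m m₁ : MeasurableSpace Ω} (hm : m ≤ mΩ) (hm₁ : m₁ ≤ mΩ)
    (hind : Indep m₁ m μ) {Y : Ω → β} (hY : Measurable[m] Y) (hYfin : (range Y).Finite)
    {G : β → Ω → ℝ} (hG : ∀ c, StronglyMeasurable[m₁] (G c))
    (hGint : ∀ c ∈ range Y, Integrable (G c) μ) :
    μ[fun ω => G (Y ω) ω | m] =ᵐ[μ] fun ω => ∫ ω', G (Y ω) ω' ∂μ := by
  classical
  set s := hYfin.toFinset
  have hYs : ∀ ω, Y ω ∈ s := fun ω => hYfin.mem_toFinset.2 (mem_range_self ω)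
  have hGint' : ∀ c ∈ s, Integrable (G c) μ := fun c hc => hGint c (hYfin.mem_toFinset.1 hc)
  -- On each of the finitely many level sets of `Y` this is `condExp_indep_eq`.
  have hsplit : (fun ω => G (Y ω) ω) = ∑ c ∈ s, (Y ⁻¹' {c}).indicator (G c) := by
    ext ω
    rw [Finset.sum_apply, Finset.sum_indicator_preimage_singleton (hYs ω)]
  have hterm : ∀ c ∈ (s : Set β), μ[(Y ⁻¹' {c}).indicator (G c) | m]
      =ᵐ[μ] (Y ⁻¹' {c}).indicator fun _ => ∫ ω', G c ω' ∂μ := by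
    intro c hc
    filter_upwards [condExp_indicator (hGint' c hc) (hY (measurableSet_singleton c)),
      condExp_indep_eq hm₁ hm (hG c) hind] with ω h₁ h₂
    simp only [h₁, Set.indicator_apply, h₂]
  rw [hsplit]
  filter_upwards [condExp_finsetSum (fun c hc =>
      (hGint' c hc).indicator (hm _ (hY (measurableSet_singleton c)))) m,
    (ae_ball_iff s.countable_toSet).2 hterm] with ω h₁ h₂
  rw [h₁, Finset.sum_apply, Finset.sum_congr rfl fun c hc => h₂ c hc,
    Finset.sum_indicator_preimage_singleton (hYs ω) fun c _ => ∫ ω', G c ω' ∂μ]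

end Freezing

lemma nonpos_of_summable_mul_of_tendsto {γ a : ℕ → ℝ} {l : ℝ} (hγ : ∀ n, 0 ≤ γ n)
    (hdiv : Tendsto (fun N => ∑ k ∈ Finset.range N, γ k) atTop atTop)
    (hsum : Summable fun n => γ n * a n) (ha : Tendsto a atTop (𝓝 l)) : l ≤ 0 := by
  by_contra! hl
  obtain ⟨N, hN⟩ := eventually_atTop.1 (ha.eventually (eventually_ge_nhds (half_lt_self hl)))
  have htail : Summable fun n => l / 2 * γ (n + N) :=
    ((summable_nat_add_iff N).2 hsum).of_nonneg_of_le
      (fun n => mul_nonneg (half_pos hl).le (hγ _))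
      (fun n => by rw [mul_comm]; exact mul_le_mul_of_nonneg_left (hN _ (by omega)) (hγ _))
  have hγsum : Summable γ :=
    (summable_nat_add_iff N).1 ((summable_mul_left_iff (half_pos hl).ne').1 htail)
  exact not_tendsto_atTop_of_tendsto_nhds hγsum.hasSum.tendsto_sum_nat hdiv

section UnitInterval

variable {Ω : Type*} {mΩ : MeasurableSpace Ω} {μ : Measure Ω}

lemma integrable_of_ae_mem_Icc [IsFiniteMeasure μ] {f : Ω → ℝ} (hf : AEStronglyMeasurable f μ)
    (h01 : ∀ᵐ ω ∂μ, f ω ∈ Icc 0 1) : Integrable f μ :=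
  .of_bound hf 1 (by
    filter_upwards [h01] with ω hω
    rw [Real.norm_eq_abs, abs_le]
    exact ⟨by linarith [hω.1], hω.2⟩)

lemma tendsto_integral_comp_of_ae_tendsto [IsFiniteMeasure μ] {X : ℕ → Ω → ℝ} {Xinf : Ω → ℝ}
    {φ : ℝ → ℝ} (hφ : Continuous φ) (hX : ∀ n, Measurable (X n)) (hX01 : ∀ n ω, X n ω ∈ Icc 0 1)
    (hlim : ∀ᵐ ω ∂μ, Tendsto (fun n => X n ω) atTop (𝓝 (Xinf ω))) :
    Tendsto (fun n => ∫ ω, φ (X n ω) ∂μ) atTop (𝓝 (∫ ω, φ (Xinf ω) ∂μ)) := by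
  obtain ⟨C, hC⟩ := isCompact_Icc.exists_bound_of_continuousOn (hφ.continuousOn (s := Icc 0 1))
  refine tendsto_integral_of_dominated_convergence (fun _ => C)
    (fun n => (hφ.measurable.comp (hX n)).aestronglyMeasurable) (integrable_const C)
    (fun n => .of_forall fun ω => hC _ (hX01 n ω)) ?_
  filter_upwards [hlim] with ω hω
  exact (hφ.tendsto _).comp hω

lemma ae_eq_zero_or_one_of_integral_mul_one_sub_nonpos [IsFiniteMeasure μ] {f : Ω → ℝ}
    (hf : Measurable f) (h01 : ∀ᵐ ω ∂μ, f ω ∈ Icc 0 1) (hint : ∫ ω, f ω * (1 - f ω) ∂μ ≤ 0) :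
    ∀ᵐ ω ∂μ, f ω = 0 ∨ f ω = 1 := by
  have hnonneg : 0 ≤ᵐ[μ] fun ω => f ω * (1 - f ω) := by
    filter_upwards [h01] with ω hω
    exact mul_nonneg hω.1 (sub_nonneg.2 hω.2)
  have hintegrable : Integrable (fun ω => f ω * (1 - f ω)) μ := by
    refine integrable_of_ae_mem_Icc (hf.mul (measurable_const.sub hf)).aestronglyMeasurable ?_
    filter_upwards [h01] with ω hω
    exact ⟨mul_nonneg hω.1 (sub_nonneg.2 hω.2), by nlinarith [hω.1, hω.2]⟩
  have hzero : (fun ω => f ω * (1 - f ω)) =ᵐ[μ] 0 :=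
    (integral_eq_zero_iff_of_nonneg_ae hnonneg hintegrable).1
      (le_antisymm hint (integral_nonneg_of_ae hnonneg))
  filter_upwards [hzero] with ω hω
  rcases mul_eq_zero.1 hω with h | h
  · exact .inl h
  · exact .inr (sub_eq_zero.1 h).symm

lemma measureReal_eq_one_eq_integral {f : Ω → ℝ} (hf : Measurable f)
    (h01 : ∀ᵐ ω ∂μ, f ω = 0 ∨ f ω = 1) : μ.real {ω | f ω = 1} = ∫ ω, f ω ∂μ := by
  change μ.real (f ⁻¹' {1}) = _
  rw [← integral_indicator_one (hf (measurableSet_singleton 1))]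
  refine integral_congr_ae ?_
  filter_upwards [h01] with ω hω
  rcases hω with h | h <;> simp [h]

end UnitInterval

section Drift

variable {Ω : Type*} {mΩ : MeasurableSpace Ω} {μ : Measure Ω} {ℱ : Filtration ℕ mΩ}
  {X D : ℕ → Ω → ℝ}

lemma submartingale_of_condExp_ae_eq_add [IsFiniteMeasure μ] (hadapt : StronglyAdapted ℱ X)
    (hint : ∀ n, Integrable (X n) μ) (hcond : ∀ n, μ[X (n + 1)|ℱ n] =ᵐ[μ] X n + D n)
    (hD : ∀ n, 0 ≤ᵐ[μ] D n) : Submartingale X ℱ μ := by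
  refine submartingale_nat hadapt hint fun n => ?_
  filter_upwards [hcond n, hD n] with ω h₁ h₂
  rw [h₁, Pi.add_apply]
  exact le_add_of_nonneg_right h₂

lemma integral_eq_add_sum_of_condExp_ae_eq_add [IsFiniteMeasure μ]
    (hint : ∀ n, Integrable (X n) μ) (hcond : ∀ n, μ[X (n + 1)|ℱ n] =ᵐ[μ] X n + D n) (N : ℕ) :
    ∫ ω, X N ω ∂μ = ∫ ω, X 0 ω ∂μ + ∑ k ∈ Finset.range N, ∫ ω, D k ω ∂μ := by
  induction N with
  | zero => simp
  | succ N ih =>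
    have hD : Integrable (D N) μ := (integrable_condExp.sub (hint N)).congr (by
      filter_upwards [hcond N] with ω h
      rw [Pi.sub_apply, h, Pi.add_apply, add_sub_cancel_left])
    rw [← integral_condExp (ℱ.le N), integral_congr_ae (hcond N), integral_add' (hint N) hD, ih,
      Finset.sum_range_succ, add_assoc]

lemma MeasureTheory.Submartingale.ae_tendsto_limitProcess_of_mem_Icc [IsProbabilityMeasure μ]
    (hsub : Submartingale X ℱ μ) (hX01 : ∀ n ω, X n ω ∈ Icc 0 1) :
    ∀ᵐ ω ∂μ, Tendsto (fun n => X n ω) atTop (𝓝 (ℱ.limitProcess X μ ω)) :=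
  hsub.ae_tendsto_limitProcess (R := 1) fun n => by
    simpa using eLpNorm_le_of_ae_bound (μ := μ) (p := 1) (C := 1) (.of_forall fun ω => by
      rw [Real.norm_eq_abs, abs_le]
      exact ⟨by linarith [(hX01 n ω).1], (hX01 n ω).2⟩)

theorem MeasureTheory.Submartingale.exists_ae_tendsto_zero_or_one [IsProbabilityMeasure μ]
    {γ : ℕ → ℝ} {π : ℝ} (hsub : Submartingale X ℱ μ) (hπ : 0 < π) (hγ : ∀ n, 0 ≤ γ (n + 1))
    (hdiv : Tendsto (fun N => ∑ k ∈ Finset.range N, γ (k + 1)) atTop atTop)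
    (hX01 : ∀ n ω, X n ω ∈ Icc 0 1)
    (hcond : ∀ n, μ[X (n + 1)|ℱ n]
      =ᵐ[μ] fun ω => X n ω + γ (n + 1) * (π * (X n ω * (1 - X n ω)))) :
    ∃ Xinf : Ω → ℝ, (∀ᵐ ω ∂μ, Tendsto (fun n => X n ω) atTop (𝓝 (Xinf ω))) ∧
      (∀ᵐ ω ∂μ, Xinf ω = 0 ∨ Xinf ω = 1) ∧
      Summable (fun n => γ (n + 1) * ∫ ω, X n ω * (1 - X n ω) ∂μ) ∧
      μ.real {ω | Xinf ω = 1}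
        = ∫ ω, X 0 ω ∂μ + π * ∑' n, γ (n + 1) * ∫ ω, X n ω * (1 - X n ω) ∂μ := by
  have hXm : ∀ n, Measurable (X n) := fun n =>
    ((hsub.stronglyMeasurable n).mono (ℱ.le n)).measurable
  set a : ℕ → ℝ := fun k => γ (k + 1) * ∫ ω, X k ω * (1 - X k ω) ∂μ
  have ha : ∀ k, 0 ≤ a k := fun k => mul_nonneg (hγ k) (integral_nonneg fun ω =>
    mul_nonneg (hX01 k ω).1 (sub_nonneg.2 (hX01 k ω).2))
  have hpartial : ∀ N, ∑ k ∈ Finset.range N, a k = (∫ ω, X N ω ∂μ - ∫ ω, X 0 ω ∂μ) / π := by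
    intro N
    rw [eq_div_iff hπ.ne', integral_eq_add_sum_of_condExp_ae_eq_add hsub.integrable hcond N,
      add_sub_cancel_left, Finset.sum_mul]
    refine Finset.sum_congr rfl fun k _ => ?_
    simp only [integral_const_mul, a]
    ring
  set Xinf := ℱ.limitProcess X μ
  have htend := hsub.ae_tendsto_limitProcess_of_mem_Icc hX01
  have hXinfm : Measurable Xinf := (Filtration.stronglyMeasurable_limitProcess.mono
    (sSup_le fun _ ⟨_, hn⟩ => hn ▸ ℱ.le _)).measurable
  have hXinf01 : ∀ᵐ ω ∂μ, Xinf ω ∈ Icc 0 1 := by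
    filter_upwards [htend] with ω hω
    exact isClosed_Icc.mem_of_tendsto hω (.of_forall fun n => hX01 n ω)
  have hsum : HasSum a ((∫ ω, Xinf ω ∂μ - ∫ ω, X 0 ω ∂μ) / π) := by
    refine (hasSum_iff_tendsto_nat_of_nonneg ha _).2 ?_
    simp_rw [hpartial]
    exact ((tendsto_integral_comp_of_ae_tendsto continuous_id hXm hX01 htend).sub_const _).div_const
      π
  have h01 : ∀ᵐ ω ∂μ, Xinf ω = 0 ∨ Xinf ω = 1 :=
    ae_eq_zero_or_one_of_integral_mul_one_sub_nonpos hXinfm hXinf01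
      (nonpos_of_summable_mul_of_tendsto hγ hdiv hsum.summable
        (tendsto_integral_comp_of_ae_tendsto (φ := fun x => x * (1 - x)) (by fun_prop) hXm hX01
          htend))
  refine ⟨Xinf, htend, h01, hsum.summable, ?_⟩
  rw [measureReal_eq_one_eq_integral hXinfm h01, hsum.tsum_eq]
  field_simp
  ring

end Drift

lemma MeasurableSpace.comap_sup_sup_eq_comap_prodMk {α β γ δ : Type*} [mβ : MeasurableSpace β]
    [mγ : MeasurableSpace γ] [mδ : MeasurableSpace δ] (f : α → β) (g : α → γ) (h : α → δ) :
    mβ.comap f ⊔ mγ.comap g ⊔ mδ.comap h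
      = MeasurableSpace.comap (fun a => (f a, g a, h a)) inferInstance := by
  rw [sup_assoc, ← comap_prodMk, ← comap_prodMk]
  rfl

section RecursiveProcess

variable {Ω β : Type*} {mΩ : MeasurableSpace Ω} [MeasurableSpace β] {μ : Measure Ω}

lemma stronglyAdapted_of_succ_eq {ℱ : Filtration ℕ mΩ} {T : ℕ → Ω → β} {X : ℕ → Ω → ℝ}
    {F : ℕ → ℝ → β → ℝ} (hF : ∀ n, Measurable (Function.uncurry (F n)))
    (hX0 : StronglyMeasurable[ℱ 0] (X 0)) (hT : ∀ n, Measurable[ℱ (n + 1)] (T (n + 1)))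
    (hrec : ∀ n ω, X (n + 1) ω = F n (X n ω) (T (n + 1) ω)) : StronglyAdapted ℱ X := by
  intro n
  induction n with
  | zero => exact hX0
  | succ n ih =>
    have hXn : Measurable[ℱ (n + 1)] (X n) := (ih.mono (ℱ.mono n.le_succ)).measurable
    rw [show X (n + 1) = fun ω => F n (X n ω) (T (n + 1) ω) from funext (hrec n)]
    exact ((hF n).comp (hXn.prodMk (hT n))).stronglyMeasurable

lemma indep_comap_succ_iSup_comap {T : ℕ → Ω → β} (hT : ∀ n, Measurable (T (n + 1)))
    (hiid : iIndepFun T μ) (n : ℕ) :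
    Indep (MeasurableSpace.comap (T (n + 1)) ‹_›)
      (⨆ k ∈ Finset.Icc 1 n, MeasurableSpace.comap (T k) ‹_›) μ := by
  -- `T 0` need not be measurable, hence the shift to `k ↦ T (k + 1)`.
  have hiid' : iIndep (fun k => MeasurableSpace.comap (T (k + 1)) ‹_›) μ :=
    (iIndepFun_iff_iIndep _ _ _).1 (hiid.precomp (add_left_injective 1))
  have h := indep_iSup_of_disjoint (fun k => (hT k).comap_le) hiid' (T := Iio n)
    (Set.disjoint_singleton_left.2 (lt_irrefl n))
  rw [iSup_singleton] at h
  refine indep_of_indep_of_le_right h (iSup₂_le fun k hk => ?_)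
  have hk' := Finset.mem_Icc.1 hk
  obtain ⟨j, rfl⟩ : ∃ j, k = j + 1 := ⟨k - 1, by omega⟩
  exact le_iSup₂ (f := fun j (_ : j ∈ Iio n) => MeasurableSpace.comap (T (j + 1)) ‹_›) j
    (mem_Iio.2 (by omega))

end RecursiveProcess

section BanditStep

/-- One step of the algorithm from `x` with step size `g` and draw `t = (u, a, b)`: arm `A` is
played if `u ≤ x`, arm `B` otherwise, and `a`, `b` are the rewards the two arms would pay. -/
noncomputable def banditStep (g x : ℝ) (t : ℝ × ℝ × ℝ) : ℝ :=
  x + g * ((1 - x) * (if t.1 ≤ x then t.2.1 else 0) - x * (if x < t.1 then t.2.2 else 0))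

lemma measurable_banditStep (g : ℝ) : Measurable (Function.uncurry (banditStep g)) := by
  unfold banditStep Function.uncurry
  refine measurable_fst.add (measurable_const.mul
    (((measurable_const.sub measurable_fst).mul ?_).sub (measurable_fst.mul ?_)))
  · exact .ite (measurableSet_le (by fun_prop) (by fun_prop)) (by fun_prop) measurable_const
  · exact .ite (measurableSet_lt (by fun_prop) (by fun_prop)) (by fun_prop) measurable_const

lemma banditStep_mem_Icc {g x : ℝ} (hg : g ∈ Icc 0 1) (hx : x ∈ Icc 0 1) {t : ℝ × ℝ × ℝ}
    (ha : t.2.1 ∈ Icc 0 1) (hb : t.2.2 ∈ Icc 0 1) : banditStep g x t ∈ Icc 0 1 := by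
  have h01 : (0 : ℝ) ∈ Icc 0 1 := left_mem_Icc.2 zero_le_one
  obtain ⟨ha₀, ha₁⟩ : (if t.1 ≤ x then t.2.1 else 0) ∈ Icc 0 1 := by split_ifs <;> assumption
  obtain ⟨hb₀, hb₁⟩ : (if x < t.1 then t.2.2 else 0) ∈ Icc 0 1 := by split_ifs <;> assumption
  have hga := mul_le_one₀ hg.2 ha₀ ha₁
  have hgb := mul_le_one₀ hg.2 hb₀ hb₁
  unfold banditStep
  constructor <;> nlinarith [hx.1, hx.2, hg.1, mul_nonneg hg.1 ha₀, mul_nonneg hg.1 hb₀]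

lemma banditStep_mem_image2 (g x : ℝ) {t : ℝ × ℝ × ℝ} (ha : t.2.1 ∈ ({0, 1} : Set ℝ))
    (hb : t.2.2 ∈ ({0, 1} : Set ℝ)) :
    banditStep g x t ∈ image2 (fun a b => x + g * ((1 - x) * a - x * b)) {0, 1} {0, 1} :=
  ⟨_, by split_ifs <;> simp_all, _, by split_ifs <;> simp_all, rfl⟩

variable {Ω : Type*} {mΩ : MeasurableSpace Ω} {μ : Measure Ω} {U : Ω → ℝ} {A B : Set Ω}

lemma banditStep_apply_indicator (g : ℝ) (Y : Ω → ℝ) (ω : Ω) :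
    banditStep g (Y ω) (U ω, A.indicator 1 ω, B.indicator 1 ω)
      = Y ω + g * ((1 - Y ω) * ({ω' | U ω' ≤ Y ω'} ∩ A).indicator 1 ω
        - Y ω * ({ω' | Y ω' < U ω'} ∩ B).indicator 1 ω) := by
  classical
  simp only [banditStep, Set.indicator_apply, mem_inter_iff, mem_ofPred_eq]
  split_ifs <;> simp_all

lemma integral_indicator_comp_mul_indicator (hU : Measurable U) (hA : MeasurableSet A)
    (hlaw : μ.map U = volume.restrict (Icc 0 1)) (hUA : IndepFun U (A.indicator (1 : Ω → ℝ)) μ)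
    {I : Set ℝ} (hI : MeasurableSet I) :
    ∫ ω, I.indicator 1 (U ω) * A.indicator 1 ω ∂μ = volume.real (I ∩ Icc 0 1) * μ.real A := by
  have hf : Measurable (I.indicator (1 : ℝ → ℝ)) := measurable_one.indicator hI
  have hUI : ∫ ω, I.indicator 1 (U ω) ∂μ = volume.real (I ∩ Icc 0 1) := by
    rw [← integral_map hU.aemeasurable hf.aestronglyMeasurable, hlaw, integral_indicator_one hI,
      measureReal_restrict_apply hI]
  rw [← hUI, ← integral_indicator_one hA]
  exact (hUA.comp hf measurable_id).integral_mul_eq_mul_integral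
    (hf.comp hU).aestronglyMeasurable (measurable_one.indicator hA).aestronglyMeasurable

lemma integral_banditStep [IsProbabilityMeasure μ] (hU : Measurable U) (hA : MeasurableSet A)
    (hB : MeasurableSet B) (hlaw : μ.map U = volume.restrict (Icc 0 1))
    (hUA : IndepFun U (A.indicator (1 : Ω → ℝ)) μ) (hUB : IndepFun U (B.indicator (1 : Ω → ℝ)) μ)
    (g : ℝ) {c : ℝ} (hc : c ∈ Icc 0 1) :
    ∫ ω, banditStep g c (U ω, A.indicator 1 ω, B.indicator 1 ω) ∂μ
      = c + g * ((μ.real A - μ.real B) * (c * (1 - c))) := by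
  have hint : ∀ {S : Set Ω} {I : Set ℝ}, MeasurableSet S → MeasurableSet I →
      Integrable (fun ω => I.indicator 1 (U ω) * S.indicator 1 ω) μ := fun hS hI =>
    ((integrable_const (1 : ℝ)).indicator hS).bdd_mul (c := 1)
      ((measurable_one.indicator hI).comp hU).aestronglyMeasurable
      (.of_forall fun _ => (norm_indicator_le_norm_self 1 _).trans (by simp))
  have hP := (hint hA (measurableSet_Iic (a := c))).const_mul (1 - c)
  have hQ := (hint hB (measurableSet_Ioi (a := c))).const_mul c
  have hPQ : Integrable (fun ω => g * ((1 - c) * ((Iic c).indicator 1 (U ω) * A.indicator 1 ω)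
      - c * ((Ioi c).indicator 1 (U ω) * B.indicator 1 ω))) μ := (hP.sub hQ).const_mul g
  have hstep : ∀ ω, banditStep g c (U ω, A.indicator 1 ω, B.indicator 1 ω)
      = c + g * ((1 - c) * ((Iic c).indicator 1 (U ω) * A.indicator 1 ω)
        - c * ((Ioi c).indicator 1 (U ω) * B.indicator 1 ω)) := by
    intro ω
    simp only [banditStep, Set.indicator_apply, mem_Iic, mem_Ioi]
    split_ifs <;> simp
  have hIic : Iic c ∩ Icc 0 1 = Icc 0 c := by
    ext y
    simp only [mem_inter_iff, mem_Iic, mem_Icc]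
    exact ⟨fun h => ⟨h.2.1, h.1⟩, fun h => ⟨h.2, h.1, h.2.trans hc.2⟩⟩
  have hIoi : Ioi c ∩ Icc 0 1 = Ioc c 1 := by
    ext y
    simp only [mem_inter_iff, mem_Ioi, mem_Icc, mem_Ioc]
    exact ⟨fun h => ⟨h.1, h.2.2⟩, fun h => ⟨h.1, hc.1.trans h.1.le, h.2⟩⟩
  simp_rw [hstep]
  rw [integral_add (integrable_const c) hPQ, integral_const_mul, integral_sub hP hQ,
    integral_const_mul, integral_const_mul,
    integral_indicator_comp_mul_indicator hU hA hlaw hUA measurableSet_Iic,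
    integral_indicator_comp_mul_indicator hU hB hlaw hUB measurableSet_Ioi, hIic, hIoi,
    Real.volume_real_Icc_of_le hc.1, Real.volume_real_Ioc_of_le hc.2, integral_const,
    smul_eq_mul, probReal_univ]
  ring

end BanditStep

section BanditProcess

variable {Ω : Type*} {mΩ : MeasurableSpace Ω} {μ : Measure Ω} {T : ℕ → Ω → ℝ × ℝ × ℝ}
  {γ : ℕ → ℝ} {X : ℕ → Ω → ℝ}

lemma banditProcess_mem_Icc (hγ : ∀ n, γ (n + 1) ∈ Icc 0 1)
    (hT01 : ∀ n ω, (T n ω).2.1 ∈ ({0, 1} : Set ℝ) ∧ (T n ω).2.2 ∈ ({0, 1} : Set ℝ))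
    (hX0 : ∀ ω, X 0 ω ∈ Icc 0 1)
    (hrec : ∀ n ω, X (n + 1) ω = banditStep (γ (n + 1)) (X n ω) (T (n + 1) ω)) :
    ∀ n ω, X n ω ∈ Icc 0 1
  | 0, ω => hX0 ω
  | n + 1, ω => by
    have h01 : ({0, 1} : Set ℝ) ⊆ Icc 0 1 := pair_subset (by simp) (by simp)
    rw [hrec]
    exact banditStep_mem_Icc (hγ n) (banditProcess_mem_Icc hγ hT01 hX0 hrec n ω)
      (h01 (hT01 _ ω).1) (h01 (hT01 _ ω).2)

lemma finite_range_banditProcess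
    (hT01 : ∀ n ω, (T n ω).2.1 ∈ ({0, 1} : Set ℝ) ∧ (T n ω).2.2 ∈ ({0, 1} : Set ℝ))
    (hX0 : (range (X 0)).Finite)
    (hrec : ∀ n ω, X (n + 1) ω = banditStep (γ (n + 1)) (X n ω) (T (n + 1) ω)) :
    ∀ n, (range (X n)).Finite
  | 0 => hX0
  | n + 1 => by
    refine ((finite_range_banditProcess hT01 hX0 hrec n).biUnion fun x _ =>
      (toFinite ({0, 1} : Set ℝ)).image2 (fun a b => x + γ (n + 1) * ((1 - x) * a - x * b))
        (toFinite ({0, 1} : Set ℝ))).subset ?_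
    rintro _ ⟨ω, rfl⟩
    rw [hrec]
    exact mem_biUnion (mem_range_self ω) (banditStep_mem_image2 _ _ (hT01 _ ω).1 (hT01 _ ω).2)

lemma condExp_banditProcess_succ [IsFiniteMeasure μ] {ℱ : Filtration ℕ mΩ} {π : ℝ}
    (hγ : ∀ n, γ (n + 1) ∈ Icc 0 1)
    (hT01 : ∀ n ω, (T n ω).2.1 ∈ ({0, 1} : Set ℝ) ∧ (T n ω).2.2 ∈ ({0, 1} : Set ℝ))
    (hTm : ∀ n, Measurable (T (n + 1)))
    (hind : ∀ n, Indep (MeasurableSpace.comap (T (n + 1)) inferInstance) (ℱ n) μ)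
    (hmean : ∀ n, ∀ c ∈ Icc (0 : ℝ) 1,
      ∫ ω, banditStep (γ (n + 1)) c (T (n + 1) ω) ∂μ = c + γ (n + 1) * (π * (c * (1 - c))))
    (hadapt : StronglyAdapted ℱ X) (hX01 : ∀ n ω, X n ω ∈ Icc 0 1)
    (hfin : ∀ n, (range (X n)).Finite)
    (hrec : ∀ n ω, X (n + 1) ω = banditStep (γ (n + 1)) (X n ω) (T (n + 1) ω)) (n : ℕ) :
    μ[X (n + 1)|ℱ n] =ᵐ[μ] fun ω => X n ω + γ (n + 1) * (π * (X n ω * (1 - X n ω))) := by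
  have hG : ∀ c, Measurable[MeasurableSpace.comap (T (n + 1)) inferInstance]
      fun ω => banditStep (γ (n + 1)) c (T (n + 1) ω) := fun c =>
    (measurable_banditStep _).comp (measurable_const.prodMk (comap_measurable _))
  have hGint : ∀ c ∈ range (X n),
      Integrable (fun ω => banditStep (γ (n + 1)) c (T (n + 1) ω)) μ := by
    rintro _ ⟨ω₀, rfl⟩
    have h01 : ({0, 1} : Set ℝ) ⊆ Icc 0 1 := pair_subset (by simp) (by simp)
    exact integrable_of_ae_mem_Icc ((hG _).mono (hTm n).comap_le le_rfl).aestronglyMeasurable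
      (.of_forall fun ω => banditStep_mem_Icc (hγ n) (hX01 n ω₀) (h01 (hT01 _ ω).1)
        (h01 (hT01 _ ω).2))
  rw [show X (n + 1) = fun ω => banditStep (γ (n + 1)) (X n ω) (T (n + 1) ω) from funext (hrec n)]
  filter_upwards [condExp_comp_eq_integral_of_indep (ℱ.le n) (hTm n).comap_le (hind n)
    (hadapt n).measurable (hfin n) (fun c => (hG c).stronglyMeasurable) hGint] with ω hω
  rw [hω, hmean n _ (hX01 n ω)]

theorem banditProcess_limit [IsProbabilityMeasure μ] {ℱ : Filtration ℕ mΩ} {x π : ℝ}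
    (hx : x ∈ Ioo 0 1) (hπ : 0 < π) (hγ : ∀ n, γ (n + 1) ∈ Ioo 0 1)
    (hdiv : Tendsto (fun N => ∑ k ∈ Finset.range N, γ (k + 1)) atTop atTop)
    (hT01 : ∀ n ω, (T n ω).2.1 ∈ ({0, 1} : Set ℝ) ∧ (T n ω).2.2 ∈ ({0, 1} : Set ℝ))
    (hTm : ∀ n, Measurable (T (n + 1))) (hTℱ : ∀ n, Measurable[ℱ (n + 1)] (T (n + 1)))
    (hind : ∀ n, Indep (MeasurableSpace.comap (T (n + 1)) inferInstance) (ℱ n) μ)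
    (hmean : ∀ n, ∀ c ∈ Icc (0 : ℝ) 1,
      ∫ ω, banditStep (γ (n + 1)) c (T (n + 1) ω) ∂μ = c + γ (n + 1) * (π * (c * (1 - c))))
    (hX0 : ∀ ω, X 0 ω = x)
    (hrec : ∀ n ω, X (n + 1) ω = banditStep (γ (n + 1)) (X n ω) (T (n + 1) ω)) :
    Submartingale X ℱ μ ∧ (∀ n ω, X n ω ∈ Icc 0 1) ∧
      ∃ Xinf : Ω → ℝ, (∀ᵐ ω ∂μ, Tendsto (fun n => X n ω) atTop (𝓝 (Xinf ω))) ∧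
        (∀ᵐ ω ∂μ, Xinf ω = 0 ∨ Xinf ω = 1) ∧
        μ {ω | Xinf ω = 1}
          = ENNReal.ofReal (x + π * ∑' n, γ (n + 1) * ∫ ω, X n ω * (1 - X n ω) ∂μ) ∧
        ENNReal.ofReal x < μ {ω | Xinf ω = 1} := by
  have hγ' : ∀ n, γ (n + 1) ∈ Icc 0 1 := fun n => Ioo_subset_Icc_self (hγ n)
  have hX0' : X 0 = fun _ => x := funext hX0
  have hX01 := banditProcess_mem_Icc hγ' hT01 (fun ω => hX0 ω ▸ Ioo_subset_Icc_self hx) hrec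
  have hadapt : StronglyAdapted ℱ X := stronglyAdapted_of_succ_eq
    (fun n => measurable_banditStep _) (hX0' ▸ stronglyMeasurable_const) hTℱ hrec
  have hcond := condExp_banditProcess_succ hγ' hT01 hTm hind hmean hadapt hX01
    (finite_range_banditProcess hT01 (hX0' ▸ (finite_singleton x).subset range_const_subset) hrec)
    hrec
  have hq : ∀ n ω, 0 ≤ X n ω * (1 - X n ω) := fun n ω =>
    mul_nonneg (hX01 n ω).1 (sub_nonneg.2 (hX01 n ω).2)
  have hsub : Submartingale X ℱ μ := submartingale_of_condExp_ae_eq_add hadapt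
    (fun n => integrable_of_ae_mem_Icc ((hadapt n).mono (ℱ.le n)).aestronglyMeasurable
      (.of_forall (hX01 n))) hcond
    fun n => .of_forall fun ω => mul_nonneg (hγ' n).1 (mul_nonneg hπ.le (hq n ω))
  obtain ⟨Xinf, htend, h01, hsum, hprob⟩ :=
    hsub.exists_ae_tendsto_zero_or_one hπ (fun n => (hγ' n).1) hdiv hX01 hcond
  have hpos : 0 < ∑' n, γ (n + 1) * ∫ ω, X n ω * (1 - X n ω) ∂μ :=
    hsum.tsum_pos (fun n => mul_nonneg (hγ' n).1 (integral_nonneg (hq n))) 0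
      (by simpa [hX0] using mul_pos (hγ 0).1 (mul_pos hx.1 (sub_pos.2 hx.2)))
  simp only [hX0, integral_const, probReal_univ, smul_eq_mul, one_mul] at hprob
  have hμ : μ {ω | Xinf ω = 1}
      = ENNReal.ofReal (x + π * ∑' n, γ (n + 1) * ∫ ω, X n ω * (1 - X n ω) ∂μ) := by
    rw [← hprob, measureReal_def, ENNReal.ofReal_toReal (measure_ne_top _ _)]
  refine ⟨hsub, hX01, Xinf, htend, h01, hμ, ?_⟩
  rw [hμ, ENNReal.ofReal_lt_ofReal_iff_of_nonneg hx.1.le]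
  exact lt_add_of_pos_right x (mul_pos hπ hpos)

end BanditProcess

theorem stmt12_general (Ω : Type*) [mΩ : MeasurableSpace Ω] (μ : Measure Ω) [IsProbabilityMeasure μ]
    (U : ℕ → Ω → ℝ) (A B : ℕ → Set Ω) (γ : ℕ → ℝ) (x : ℝ) (hx : x ∈ Set.Ioo (0:ℝ) 1)
    (pA pB π : ℝ) (hord : 0 < pB ∧ pB < pA ∧ pA ≤ 1) (hπ : π = pA - pB)
    (hpA : ∀ n ≥ 1, μ (A n) = ENNReal.ofReal pA)
    (hpB : ∀ n ≥ 1, μ (B n) = ENNReal.ofReal pB)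
    (hγ : ∀ n ≥ 1, γ n ∈ Set.Ioo (0:ℝ) 1)
    (hΓdiv : Filter.Tendsto (fun n => ∑ k ∈ Finset.Icc 1 n, γ k) atTop atTop)
    (hA : ∀ n ≥ 1, MeasurableSet (A n)) (hB : ∀ n ≥ 1, MeasurableSet (B n))
    (hU : ∀ n ≥ 1, Measurable (U n))
    (hUlaw : ∀ n ≥ 1, μ.map (U n) = volume.restrict (Set.Icc (0:ℝ) 1))
    (hiid : iIndepFun (m := fun _ : ℕ => (inferInstance : MeasurableSpace (ℝ × ℝ × ℝ)))
      (fun n ω => (U n ω, (A n).indicator (1 : Ω → ℝ) ω, (B n).indicator (1 : Ω → ℝ) ω)) μ)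
    (hindep : IndepFun (fun ω (n : ℕ) => U n ω)
      (fun ω (n : ℕ) => ((A n).indicator (1 : Ω → ℝ) ω, (B n).indicator (1 : Ω → ℝ) ω)) μ)
    (X : ℕ → Ω → ℝ) (hX0 : ∀ ω, X 0 ω = x)
    (hrec : ∀ n ω, X (n + 1) ω = X n ω + γ (n + 1) *
      ((1 - X n ω) * ({ω' | U (n + 1) ω' ≤ X n ω'} ∩ A (n + 1)).indicator (1 : Ω → ℝ) ω
        - X n ω * ({ω' | X n ω' < U (n + 1) ω'} ∩ B (n + 1)).indicator (1 : Ω → ℝ) ω))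
    (ℱ : Filtration ℕ mΩ)
    (hℱ : ∀ n, (ℱ n : MeasurableSpace Ω) = ⨆ k ∈ Finset.Icc 1 n,
      (MeasurableSpace.comap (U k) inferInstance
        ⊔ MeasurableSpace.comap ((A k).indicator (1 : Ω → ℝ)) inferInstance
        ⊔ MeasurableSpace.comap ((B k).indicator (1 : Ω → ℝ)) inferInstance)) :
    Submartingale X ℱ μ ∧ (∀ n ω, X n ω ∈ Set.Icc (0:ℝ) 1) ∧
      ∃ Xinf : Ω → ℝ,
        (∀ᵐ ω ∂μ, Filter.Tendsto (fun n => X n ω) atTop (nhds (Xinf ω))) ∧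
        (∀ᵐ ω ∂μ, Xinf ω = 0 ∨ Xinf ω = 1) ∧
        μ {ω | Xinf ω = 1}
          = ENNReal.ofReal (x + π * ∑' n : ℕ, γ (n + 1) * ∫ ω, X n ω * (1 - X n ω) ∂μ) ∧
        ENNReal.ofReal x < μ {ω | Xinf ω = 1} := by
  obtain ⟨hpB0, hBA, -⟩ := hord
  set T : ℕ → Ω → ℝ × ℝ × ℝ := fun n ω => (U n ω, (A n).indicator 1 ω, (B n).indicator 1 ω)
  have hTm : ∀ n, Measurable (T (n + 1)) := fun n => (hU _ n.succ_pos).prodMk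
    ((measurable_one.indicator (hA _ n.succ_pos)).prodMk
      (measurable_one.indicator (hB _ n.succ_pos)))
  have hℱT : ∀ n, (ℱ n : MeasurableSpace Ω)
      = ⨆ k ∈ Finset.Icc 1 n, MeasurableSpace.comap (T k) inferInstance := fun n =>
    (hℱ n).trans (biSup_congr fun k _ => MeasurableSpace.comap_sup_sup_eq_comap_prodMk _ _ _)
  have hmean : ∀ n, ∀ c ∈ Icc (0 : ℝ) 1, ∫ ω, banditStep (γ (n + 1)) c (T (n + 1) ω) ∂μ
      = c + γ (n + 1) * (π * (c * (1 - c))) := by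
    intro n c hc
    have hn := n.succ_pos
    rw [integral_banditStep (hU _ hn) (hA _ hn) (hB _ hn) (hUlaw _ hn)
      (hindep.comp (measurable_pi_apply _) (measurable_fst.comp (measurable_pi_apply _)))
      (hindep.comp (measurable_pi_apply _) (measurable_snd.comp (measurable_pi_apply _))) _ hc,
      measureReal_def, measureReal_def, hpA _ hn, hpB _ hn, ENNReal.toReal_ofReal (by linarith),
      ENNReal.toReal_ofReal hpB0.le, hπ]
  have hdiv : Tendsto (fun N => ∑ k ∈ Finset.range N, γ (k + 1)) atTop atTop := by
    simpa only [Finset.range_eq_Ico, Finset.sum_Ico_add', zero_add,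
      Finset.Ico_add_one_right_eq_Icc] using hΓdiv
  exact banditProcess_limit (T := T) hx (by linarith) (fun n => hγ _ n.succ_pos) hdiv
    (fun n ω => ⟨indicator_eq_zero_or_self _ _ _, indicator_eq_zero_or_self _ _ _⟩) hTm
    (fun n => measurable_iff_comap_le.2 ((le_iSup₂ (n + 1) (by simp)).trans (hℱT _).ge))
    (fun n => hℱT n ▸ indep_comap_succ_iSup_comap hTm hiid n) hmean hX0
    (fun n ω => (hrec n ω).trans (banditStep_apply_indicator _ _ ω).symm)

theorem stmt12 (Ω : Type*) [mΩ : MeasurableSpace Ω] (μ : Measure Ω) [IsProbabilityMeasure μ]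
    (U : ℕ → Ω → ℝ) (A B : ℕ → Set Ω) (γ : ℕ → ℝ) (x : ℝ) (hx : x ∈ Set.Ioo (0:ℝ) 1)
    (pA pB π : ℝ) (hord : 0 < pB ∧ pB < pA ∧ pA ≤ 1) (hπ : π = pA - pB)
    (hpA : ∀ n ≥ 1, μ (A n) = ENNReal.ofReal pA)
    (hpB : ∀ n ≥ 1, μ (B n) = ENNReal.ofReal pB)
    (hγ : ∀ n ≥ 1, γ n ∈ Set.Ioo (0:ℝ) 1)
    (hΓdiv : Filter.Tendsto (fun n => ∑ k ∈ Finset.Icc 1 n, γ k) atTop atTop)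
    (hA : ∀ n ≥ 1, MeasurableSet (A n)) (hB : ∀ n ≥ 1, MeasurableSet (B n))
    (hU : ∀ n ≥ 1, Measurable (U n))
    (hUlaw : ∀ n ≥ 1, μ.map (U n) = volume.restrict (Set.Icc (0:ℝ) 1))
    (hiid : iIndepFun (m := fun _ : ℕ => (inferInstance : MeasurableSpace (ℝ × ℝ × ℝ)))
      (fun n ω => (U n ω, (A n).indicator (1 : Ω → ℝ) ω, (B n).indicator (1 : Ω → ℝ) ω)) μ)
    (hident : ∀ n ≥ 1,
      IdentDistrib (fun ω => ((A n).indicator (1 : Ω → ℝ) ω, (B n).indicator (1 : Ω → ℝ) ω))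
        (fun ω => ((A 1).indicator (1 : Ω → ℝ) ω, (B 1).indicator (1 : Ω → ℝ) ω)) μ μ)
    (hindep : IndepFun (fun ω (n : ℕ) => U n ω)
      (fun ω (n : ℕ) => ((A n).indicator (1 : Ω → ℝ) ω, (B n).indicator (1 : Ω → ℝ) ω)) μ)
    (X : ℕ → Ω → ℝ) (hX0 : ∀ ω, X 0 ω = x)
    (hrec : ∀ n ω, X (n + 1) ω = X n ω + γ (n + 1) *
      ((1 - X n ω) * ({ω' | U (n + 1) ω' ≤ X n ω'} ∩ A (n + 1)).indicator (1 : Ω → ℝ) ω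
        - X n ω * ({ω' | X n ω' < U (n + 1) ω'} ∩ B (n + 1)).indicator (1 : Ω → ℝ) ω))
    (ℱ : Filtration ℕ mΩ)
    (hℱ : ∀ n, (ℱ n : MeasurableSpace Ω) = ⨆ k ∈ Finset.Icc 1 n,
      (MeasurableSpace.comap (U k) inferInstance
        ⊔ MeasurableSpace.comap ((A k).indicator (1 : Ω → ℝ)) inferInstance
        ⊔ MeasurableSpace.comap ((B k).indicator (1 : Ω → ℝ)) inferInstance)) :
    Submartingale X ℱ μ ∧ (∀ n ω, X n ω ∈ Set.Icc (0:ℝ) 1) ∧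
      ∃ Xinf : Ω → ℝ,
        (∀ᵐ ω ∂μ, Filter.Tendsto (fun n => X n ω) atTop (nhds (Xinf ω))) ∧
        (∀ᵐ ω ∂μ, Xinf ω = 0 ∨ Xinf ω = 1) ∧
        μ {ω | Xinf ω = 1}
          = ENNReal.ofReal (x + π * ∑' n : ℕ, γ (n + 1) * ∫ ω, X n ω * (1 - X n ω) ∂μ) ∧
        ENNReal.ofReal x < μ {ω | Xinf ω = 1} :=
  stmt12_general Ω (mΩ := mΩ) μ U A B γ x hx pA pB π hord hπ hpA hpB hγ hΓdiv hA hB hU hUlaw hiid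
    hindep X hX0 hrec ℱ hℱ
end
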